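/- arXiv:1905.13684 — 2 statements merged into one kernel-verified Lean document; each statement's English description precedes it below -/
import Mathlib

section
/- Let d, n ≥ 1 and let W be a matrix A₁ weight on ℝ^d. Then for every e ∈ ℂⁿ the scalar weight x ↦ |W(x)e| satisfies [ |We| ]_{A∞} ≤ [W]_{A₁}; that is, [W]_{A_{1,∞}^{sc}} ≤ [W]_{A₁}. -/
open MeasureTheory ENNReal
open scoped ComplexOrder

noncomputable section

abbrev Rd (d : ℕ) := EuclideanSpace ℝ (Fin d)
abbrev Mat (n : ℕ) := Matrix (Fin n) (Fin n) ℂ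
abbrev Vec (n : ℕ) := EuclideanSpace ℂ (Fin n)

/-- A cube in `ℝ^d` with sides parallel to the coordinate axes, given by its
lower-left corner and (positive) side length. -/
structure Cube (d : ℕ) where
  corner : Rd d
  side : ℝ
  side_pos : 0 < side

namespace Cube

/-- The underlying set of the cube. -/
def set {d : ℕ} (Q : Cube d) : Set (Rd d) :=
  {x | ∀ i, Q.corner i ≤ x i ∧ x i ≤ Q.corner i + Q.side}

/-- The concentric triple `3Q` of a cube. -/
def triple {d : ℕ} (Q : Cube d) : Set (Rd d) :=
  {x | ∀ i, Q.corner i - Q.side ≤ x i ∧ x i ≤ Q.corner i + 2 * Q.side}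

end Cube

/-- Operator norm of an `n × n` complex matrix acting on `ℂⁿ` with the Euclidean norm. -/
def opNorm {n : ℕ} (A : Mat n) : ℝ := ‖Matrix.toEuclideanCLM (𝕜 := ℂ) (n := Fin n) A‖

/-- A matrix acting on a Euclidean vector. -/
def mvec {n : ℕ} (A : Mat n) (v : Vec n) : Vec n := Matrix.toEuclideanLin A v

/-- Fractional power of a Hermitian matrix via the spectral calculus (junk value `1`
for non-Hermitian matrices). -/
def matPow {n : ℕ} (A : Mat n) (s : ℝ) : Mat n :=
  if h : A.IsHermitian then
    (h.eigenvectorUnitary : Mat n) *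
      Matrix.diagonal (fun i => ((h.eigenvalues i ^ s : ℝ) : ℂ)) *
      star (h.eigenvectorUnitary : Mat n)
  else 1

/-- A matrix weight: measurable, positive definite (hence Hermitian) a.e. -/
def IsMatrixWeight {d n : ℕ} (W : Rd d → Mat n) : Prop :=
  (∀ i j, Measurable fun x => W x i j) ∧ ∀ᵐ x : Rd d, (W x).PosDef


/-- Componentwise measurability of a `ℂⁿ`-valued function. -/
def MeasurableV {d n : ℕ} (f : Rd d → Vec n) : Prop := ∀ i, Measurable fun x => f x i
/-- The matrix `A₁` characteristic of `W`. -/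
def A1Const {d n : ℕ} (W : Rd d → Mat n) : ℝ≥0∞ :=
  ⨆ Q : Cube d,
    essSup (fun y => (volume Q.set)⁻¹ *
      ∫⁻ x in Q.set, ENNReal.ofReal (opNorm (W x * (W y)⁻¹))) (volume.restrict Q.set)

/-- The matrix `A_q` characteristic of `W`, `1 < q < ∞`. -/
def AqConst {d n : ℕ} (W : Rd d → Mat n) (q : ℝ) : ℝ≥0∞ :=
  ⨆ Q : Cube d, (volume Q.set)⁻¹ * ∫⁻ x in Q.set,
    ((volume Q.set)⁻¹ * ∫⁻ y in Q.set,
        ENNReal.ofReal (opNorm (matPow (W x) (1/q) * matPow (W y) (-(1/q)))) ^ (q/(q-1))) ^ (q-1)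

/-- Hardy–Littlewood maximal operator (over cubes) of an `ℝ≥0∞`-valued function. -/
def HLM {d : ℕ} (g : Rd d → ℝ≥0∞) (x : Rd d) : ℝ≥0∞ :=
  ⨆ (Q : Cube d) (_ : x ∈ Q.set), (volume Q.set)⁻¹ * ∫⁻ y in Q.set, g y

/-- The Fujii–Wilson `A∞` characteristic of a scalar weight `w`. -/
def AInftyConst {d : ℕ} (w : Rd d → ℝ≥0∞) : ℝ≥0∞ :=
  ⨆ Q : Cube d, (∫⁻ x in Q.set, w x)⁻¹ * ∫⁻ x in Q.set, HLM (Q.set.indicator w) x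

/-- The scalar `A_{q,∞}` characteristic of a matrix weight `W`. -/
def AqScConst {d n : ℕ} (W : Rd d → Mat n) (q : ℝ) : ℝ≥0∞ :=
  ⨆ e : Vec n, AInftyConst (fun x => (‖mvec (matPow (W x) (1/q)) e‖₊ : ℝ≥0∞) ^ q)

/-! For a.e. `y` in a cube `Q`, writing `W(x) e = (W(x) W(y)⁻¹) (W(y) e)` and averaging over
`x ∈ Q` gives `⨍_Q |W e| ≤ [W]_{A₁} |W(y) e|`. Since every cube sits inside a rational cube of
almost the same volume, countably many cubes suffice, and the bound passes to the maximal
function: `M(|W e|) ≤ [W]_{A₁} |W e|` a.e. Integrating this over a cube bounds the Fujii–Wilson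
characteristic. For `q = 1` the power `W^{1/q}` is `W` itself, which gives the second claim. -/

open scoped NNReal Topology

section

variable {d n : ℕ}

namespace Cube

lemma set_eq_preimage_pi (Q : Cube d) : Q.set = (MeasurableEquiv.toLp 2 (Fin d → ℝ)).symm ⁻¹'
    Set.univ.pi fun i => Set.Icc (Q.corner i) (Q.corner i + Q.side) := by
  ext x
  simp only [Cube.set, Set.mem_preimage, Set.mem_univ_pi, Set.mem_Icc]
  rfl

lemma measurableSet_set (Q : Cube d) : MeasurableSet Q.set := by
  rw [set_eq_preimage_pi]
  exact (MeasurableEquiv.toLp 2 (Fin d → ℝ)).symm.measurable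
    (MeasurableSet.univ_pi fun _ => measurableSet_Icc)

lemma volume_set (Q : Cube d) : volume Q.set = ENNReal.ofReal (Q.side ^ d) := by
  rw [set_eq_preimage_pi, (EuclideanSpace.volume_preserving_symm_measurableEquiv_toLp
    (Fin d)).measure_preimage (MeasurableSet.univ_pi fun _ => measurableSet_Icc).nullMeasurableSet,
    volume_pi_pi]
  simp [Real.volume_Icc, ← ENNReal.ofReal_pow Q.side_pos.le]

lemma volume_set_ne_zero (Q : Cube d) : volume Q.set ≠ 0 := by
  rw [volume_set, ne_eq, ENNReal.ofReal_eq_zero, not_le]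
  exact pow_pos Q.side_pos d

lemma volume_set_ne_top (Q : Cube d) : volume Q.set ≠ ∞ := by
  rw [volume_set]
  exact ENNReal.ofReal_ne_top

def ofRat (c : Fin d → ℚ) (s : {q : ℚ // 0 < q}) : Cube d :=
  ⟨WithLp.toLp 2 fun i => (c i : ℝ), s.1, by exact_mod_cast s.2⟩

lemma exists_ofRat_superset (R : Cube d) {a : ℝ≥0∞} (ha : a < 1) :
    ∃ c s, R.set ⊆ (ofRat c s).set ∧ a * volume (ofRat c s).set ≤ volume R.set := by
  lift a to ℝ≥0 using ha.ne_top
  have hs := pow_pos R.side_pos d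
  have hshrink : ∀ᶠ t in 𝓝[>] R.side, (a : ℝ) * t ^ d < R.side ^ d := by
    refine nhdsWithin_le_nhds ((Continuous.tendsto (by fun_prop) R.side).eventually
      (gt_mem_nhds ?_))
    exact mul_lt_of_lt_one_left hs (by exact_mod_cast ha)
  obtain ⟨u, hRu, hu⟩ := mem_nhdsGT_iff_exists_Ioo_subset.1 hshrink
  obtain ⟨s, hRs, hsu⟩ := exists_rat_btwn (Set.mem_Ioi.1 hRu)
  have hs_pos : (0 : ℚ) < s := by exact_mod_cast R.side_pos.trans hRs
  choose c hc_lo hc_hi using fun i => exists_rat_btwn (sub_lt_self (R.corner i) (sub_pos.2 hRs))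
  refine ⟨c, ⟨s, hs_pos⟩, fun x hx i => ?_, ?_⟩
  · have hxi := hx i
    exact ⟨by simp only [ofRat]; linarith [hc_hi i], by simp only [ofRat]; linarith [hc_lo i]⟩
  · rw [volume_set, volume_set, ← ENNReal.ofReal_coe_nnreal, ← ENNReal.ofReal_mul a.coe_nonneg]
    exact ENNReal.ofReal_le_ofReal (hu ⟨hRs, hsu⟩).le

end Cube

lemma hlm_mono {g g' : Rd d → ℝ≥0∞} (h : g ≤ g') : HLM g ≤ HLM g' := fun _ =>
  iSup₂_mono fun _ _ => mul_le_mul_right (lintegral_mono fun x => h x) _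

lemma hlm_congr_ae {g g' : Rd d → ℝ≥0∞} (h : g =ᵐ[volume] g') : HLM g = HLM g' :=
  funext fun _ => iSup_congr fun _ => iSup_congr fun _ => by
    rw [lintegral_congr_ae (ae_restrict_of_ae h)]

lemma aInftyConst_congr_ae {w w' : Rd d → ℝ≥0∞} (h : w =ᵐ[volume] w') :
    AInftyConst w = AInftyConst w' := by
  refine iSup_congr fun Q => ?_
  have hind : Q.set.indicator w =ᵐ[volume] Q.set.indicator w' :=
    h.mono fun y hy => by simp only [Set.indicator, hy]
  rw [lintegral_congr_ae (ae_restrict_of_ae h), hlm_congr_ae hind]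

lemma ae_hlm_le_of_forall_cube {w v : Rd d → ℝ≥0∞}
    (h : ∀ Q : Cube d, ∀ᵐ y, y ∈ Q.set → (volume Q.set)⁻¹ * ∫⁻ x in Q.set, w x ≤ v y) :
    ∀ᵐ y, HLM w y ≤ v y := by
  have hrat : ∀ᵐ y, ∀ c s, y ∈ (Cube.ofRat c s).set →
      (volume (Cube.ofRat c s).set)⁻¹ * ∫⁻ x in (Cube.ofRat c s).set, w x ≤ v y :=
    ae_all_iff.2 fun c => ae_all_iff.2 fun s => h _
  filter_upwards [hrat] with y hy
  refine iSup₂_le fun R hyR => ENNReal.le_of_forall_lt_one_mul_le fun a ha => ?_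
  obtain ⟨c, s, hRQ, hvol⟩ := R.exists_ofRat_superset ha
  set Q := Cube.ofRat c s
  calc a * ((volume R.set)⁻¹ * ∫⁻ x in R.set, w x)
      ≤ a * ((volume R.set)⁻¹ * ∫⁻ x in Q.set, w x) := by gcongr
    _ = a * (volume R.set)⁻¹ * (volume Q.set * (volume Q.set)⁻¹) * ∫⁻ x in Q.set, w x := by
        rw [ENNReal.mul_inv_cancel Q.volume_set_ne_zero Q.volume_set_ne_top]
        ring
    _ = (volume R.set)⁻¹ * (a * volume Q.set) *
          ((volume Q.set)⁻¹ * ∫⁻ x in Q.set, w x) := by ring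
    _ ≤ (volume R.set)⁻¹ * volume R.set * v y := by gcongr; exact hy c s (hRQ hyR)
    _ = v y := by
        rw [ENNReal.inv_mul_cancel R.volume_set_ne_zero R.volume_set_ne_top, one_mul]

lemma aInftyConst_le_of_ae_hlm_le {w : Rd d → ℝ≥0∞} {C : ℝ≥0∞}
    (h : ∀ᵐ y, HLM w y ≤ C * w y) : AInftyConst w ≤ C := by
  refine iSup_le fun Q => ?_
  rcases eq_or_ne C ∞ with rfl | hC
  · exact le_top
  rw [mul_comm, ← div_eq_mul_inv]
  refine ENNReal.div_le_of_le_mul ?_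
  calc ∫⁻ x in Q.set, HLM (Q.set.indicator w) x
      ≤ ∫⁻ x in Q.set, HLM w x := lintegral_mono (hlm_mono (Set.indicator_le_self _ _))
    _ ≤ ∫⁻ x in Q.set, C * w x := lintegral_mono_ae (ae_restrict_of_ae h)
    _ = C * ∫⁻ x in Q.set, w x := lintegral_const_mul' _ _ hC

lemma mvec_mul (A B : Mat n) (v : Vec n) : mvec (A * B) v = mvec A (mvec B v) := by
  simp [mvec, Matrix.toLpLin_apply, Matrix.mulVec_mulVec]

lemma norm_mvec_le (A : Mat n) (v : Vec n) : ‖mvec A v‖ ≤ opNorm A * ‖v‖ := by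
  rw [mvec, ← Matrix.coe_toEuclideanCLM_eq_toEuclideanLin]
  exact (Matrix.toEuclideanCLM (𝕜 := ℂ) (n := Fin n) A).le_opNorm v

lemma enorm_mvec_le_opNorm_mul_inv (A : Mat n) {B : Mat n} (hB : IsUnit B) (v : Vec n) :
    (‖mvec A v‖₊ : ℝ≥0∞) ≤ ENNReal.ofReal (opNorm (A * B⁻¹)) * ‖mvec B v‖₊ := by
  have hAB : A * B⁻¹ * B = A :=
    Matrix.nonsing_inv_mul_cancel_right B A ((Matrix.isUnit_iff_isUnit_det B).1 hB)
  rw [← ENNReal.ofReal_coe_nnreal, ← ENNReal.ofReal_coe_nnreal, coe_nnnorm, coe_nnnorm,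
    ← ENNReal.ofReal_mul' (norm_nonneg _)]
  refine ENNReal.ofReal_le_ofReal ?_
  calc ‖mvec A v‖ = ‖mvec (A * B⁻¹) (mvec B v)‖ := by rw [← mvec_mul, hAB]
    _ ≤ opNorm (A * B⁻¹) * ‖mvec B v‖ := norm_mvec_le _ _

lemma ae_setAverage_opNorm_le_a1Const (W : Rd d → Mat n) (Q : Cube d) :
    ∀ᵐ y, y ∈ Q.set →
      (volume Q.set)⁻¹ * ∫⁻ x in Q.set, ENNReal.ofReal (opNorm (W x * (W y)⁻¹)) ≤ A1Const W := by
  rw [← ae_restrict_iff' Q.measurableSet_set]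
  exact (ENNReal.ae_le_essSup _).mono fun _ hy => hy.trans (le_iSup_of_le Q le_rfl)

lemma ae_setAverage_enorm_mvec_le {W : Rd d → Mat n} (hW : ∀ᵐ x, IsUnit (W x)) (v : Vec n)
    (Q : Cube d) :
    ∀ᵐ y, y ∈ Q.set →
      (volume Q.set)⁻¹ * ∫⁻ x in Q.set, (‖mvec (W x) v‖₊ : ℝ≥0∞) ≤
        A1Const W * ‖mvec (W y) v‖₊ := by
  filter_upwards [ae_setAverage_opNorm_le_a1Const W Q, hW] with y hA1 hWy hyQ
  calc (volume Q.set)⁻¹ * ∫⁻ x in Q.set, (‖mvec (W x) v‖₊ : ℝ≥0∞)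
      ≤ (volume Q.set)⁻¹ *
          ∫⁻ x in Q.set, ENNReal.ofReal (opNorm (W x * (W y)⁻¹)) * ‖mvec (W y) v‖₊ := by
        gcongr with x
        exact enorm_mvec_le_opNorm_mul_inv _ hWy v
    _ = (volume Q.set)⁻¹ * (∫⁻ x in Q.set, ENNReal.ofReal (opNorm (W x * (W y)⁻¹))) *
          ‖mvec (W y) v‖₊ := by
        rw [lintegral_mul_const' _ _ ENNReal.coe_ne_top, mul_assoc]
    _ ≤ A1Const W * ‖mvec (W y) v‖₊ := by gcongr; exact hA1 hyQ

lemma matPow_one_of_isHermitian {A : Mat n} (hA : A.IsHermitian) : matPow A 1 = A := by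
  rw [matPow, dif_pos hA]
  conv_rhs => rw [hA.spectral_theorem, Unitary.conjStarAlgAut_apply]
  simp [Real.rpow_one, Function.comp_def]

end

theorem a1_controls_scalar_ainfty_general (d n : ℕ)
    (W : Rd d → Mat n) (hW : IsMatrixWeight W) :
    (∀ e : Vec n, AInftyConst (fun x => (‖mvec (W x) e‖₊ : ℝ≥0∞)) ≤ A1Const W) ∧
    AqScConst W 1 ≤ A1Const W := by
  have hnorm : ∀ e : Vec n, AInftyConst (fun x => (‖mvec (W x) e‖₊ : ℝ≥0∞)) ≤ A1Const W :=
    fun e => aInftyConst_le_of_ae_hlm_le <| ae_hlm_le_of_forall_cube <|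
      ae_setAverage_enorm_mvec_le (hW.2.mono fun _ hx => hx.isUnit) e
  refine ⟨hnorm, iSup_le fun e => ?_⟩
  have hpow : (fun x => (‖mvec (matPow (W x) (1 / 1)) e‖₊ : ℝ≥0∞) ^ (1 : ℝ)) =ᵐ[volume]
      fun x => (‖mvec (W x) e‖₊ : ℝ≥0∞) := by
    filter_upwards [hW.2] with x hx
    rw [div_one, ENNReal.rpow_one, matPow_one_of_isHermitian hx.isHermitian]
  exact (aInftyConst_congr_ae hpow).trans_le (hnorm e)

/-- For a matrix `A₁` weight, the scalar `A∞` characteristics of the weights `|W e|` are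
controlled by `[W]_{A₁}`; in particular `[W]_{A^{sc}_{1,∞}} ≤ [W]_{A₁}`. -/
theorem a1_controls_scalar_ainfty (d n : ℕ) (hd : 1 ≤ d) (hn : 1 ≤ n)
    (W : Rd d → Mat n) (hW : IsMatrixWeight W) (hA1 : A1Const W ≠ ⊤) :
    (∀ e : Vec n, AInftyConst (fun x => (‖mvec (W x) e‖₊ : ℝ≥0∞)) ≤ A1Const W) ∧
    AqScConst W 1 ≤ A1Const W :=
  a1_controls_scalar_ainfty_general d n W hW

end
end

section
/- Let d ≥ 0 be an integer, let 1 ≤ q < p < ∞ be real numbers, and let K ≥ 1. Set τ = 8·2^{d+11}, ε = 1/(p · (p/(p−q)) · τ · K), and s = 1 + 1/(p' · (p/(p−q)) · (τ−2) · K), where p' = p/(p−1) and r' denotes r/(r−1) for any r > 1. Then (p−1)τε ≤ 1, the quantity p' − (ps)'(1+ε) is strictly positive, and 1/(p' − (ps)'(1+ε)) ≤ (ps−1)(τ−2)/(εp) ≤ c · K, where c is a constant depending only on d, p, q. -/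
set_option maxHeartbeats 1000000

noncomputable section

private lemma rough_aux (p R T K ε δ S : ℝ) (hp : 1 < p) (hR : 1 ≤ R) (hT : 3 ≤ T)
    (hK : 1 ≤ K) (hε : ε = 1 / (p * R * T * K)) (hδ : δ = (p - 1) / (p * R * (T - 2) * K))
    (hS : S = p * (1 + δ)) :
    (p - 1) * T * ε ≤ 1 ∧
    0 < p / (p - 1) - S / (S - 1) * (1 + ε) ∧
    1 / (p / (p - 1) - S / (S - 1) * (1 + ε)) ≤ (S - 1) * (T - 2) / (ε * p) ∧
    (S - 1) * (T - 2) / (ε * p) ≤ 2 * (T - 2) * p * R * T * K := by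
  have hp0 : 0 < p := by linarith
  have hp1 : 0 < p - 1 := by linarith
  have hT2 : 0 < T - 2 := by linarith
  have hT0 : 0 < T := by linarith
  have hR0 : 0 < R := by linarith
  have hK0 : 0 < K := by linarith
  have hden : 0 < p * R * T * K := by positivity
  have hden2 : 0 < p * R * (T - 2) * K := by positivity
  have hεpos : 0 < ε := by rw [hε]; positivity
  have hδpos : 0 < δ := by rw [hδ]; positivity
  have hprk : p - 1 ≤ p * R * K := by
    nlinarith [mul_le_mul_of_nonneg_left hR hp0.le, mul_le_mul_of_nonneg_left hK (mul_pos hp0 hR0).le]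
  -- claim 1
  have c1 : (p - 1) * T * ε ≤ 1 := by
    rw [hε, mul_one_div, div_le_one hden]
    nlinarith
  -- δ * (T-2) ≤ 1
  have hδeq : δ * (T - 2) = (p - 1) / (p * R * K) := by
    rw [hδ]; field_simp
  have hδle : δ * (T - 2) ≤ 1 := by
    rw [hδeq, div_le_one (by positivity)]; exact hprk
  -- key identity
  have hid : (p - 1) * ε * T = δ * (T - 2) := by
    rw [hε, hδ]; field_simp
  have hS1 : S - 1 = p - 1 + p * δ := by rw [hS]; ring
  have hS1pos : 0 < S - 1 := by nlinarith [mul_pos hp0 hδpos]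
  -- numerator facts
  have hNT : T * (δ - (p - 1) * ε * (1 + δ)) = δ * (2 - (T - 2) * δ) := by
    linear_combination (-(1 + δ)) * hid
  have hNpos : 0 < δ - (p - 1) * ε * (1 + δ) := by nlinarith
  have hkey : (p - 1) * ε ≤ (δ - (p - 1) * ε * (1 + δ)) * (T - 2) := by
    nlinarith [hid, hNT, hδle, mul_pos hδpos hT2]
  -- value of D
  have hDval : p / (p - 1) - S / (S - 1) * (1 + ε)
      = p * (δ - (p - 1) * ε * (1 + δ)) / ((p - 1) * (S - 1)) := by
    rw [hS1, hS]
    have h1 : p - 1 + p * δ ≠ 0 := by rw [← hS1]; exact ne_of_gt hS1pos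
    field_simp
    ring
  have hDpos : 0 < p / (p - 1) - S / (S - 1) * (1 + ε) := by
    rw [hDval]; exact div_pos (mul_pos hp0 hNpos) (mul_pos hp1 hS1pos)
  refine ⟨c1, hDpos, ?_, ?_⟩
  · -- claim 3
    have hL : ε * p / ((T - 2) * (S - 1)) ≤ p / (p - 1) - S / (S - 1) * (1 + ε) := by
      rw [hDval, div_le_div_iff₀ (by positivity) (by positivity)]
      nlinarith [mul_le_mul_of_nonneg_left hkey (mul_pos hp0 hS1pos).le]
    have := one_div_le_one_div_of_le (by positivity) hL
    rw [one_div_div] at this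
    calc 1 / (p / (p - 1) - S / (S - 1) * (1 + ε)) ≤ (T - 2) * (S - 1) / (ε * p) := this
      _ = (S - 1) * (T - 2) / (ε * p) := by ring
  · -- claim 4
    have hεinv : ε * (p * R * T * K) = 1 := by rw [hε]; field_simp
    rw [div_le_iff₀ (by positivity)]
    have hδ1 : δ ≤ 1 := by nlinarith [mul_nonneg hδpos.le (by linarith : (0:ℝ) ≤ T - 3)]
    have hS1le : S - 1 ≤ 2 * p := by
      rw [hS1]; nlinarith [mul_le_mul_of_nonneg_left hδ1 hp0.le]
    have h1 : 2 * (T - 2) * p * R * T * K * (ε * p) = 2 * (T - 2) * p := by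
      linear_combination (2 * (T - 2) * p) * hεinv
    nlinarith [mul_le_mul_of_nonneg_right hS1le hT2.le, h1]

/-- The algebraic computation underlying `‖M_{(ps)'(1+ε)}‖_{L^{p'}} ≲ K^{1/p'}`. -/
theorem rough_exponent_arithmetic (d : ℕ) (p q : ℝ) (hq : 1 ≤ q) (hqp : q < p) :
    ∃ c : ℝ, 0 < c ∧
      ∀ K : ℝ, 1 ≤ K →
        (p - 1) * (8 * 2 ^ (d + 11)) * (1 / (p * (p/(p-q)) * (8 * 2 ^ (d + 11)) * K)) ≤ 1 ∧
        (0 : ℝ) <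
          p/(p-1) -
            (p * (1 + 1/((p/(p-1)) * (p/(p-q)) * (8 * 2 ^ (d + 11) - 2) * K)) /
              (p * (1 + 1/((p/(p-1)) * (p/(p-q)) * (8 * 2 ^ (d + 11) - 2) * K)) - 1)) *
            (1 + 1 / (p * (p/(p-q)) * (8 * 2 ^ (d + 11)) * K)) ∧
        1 / (p/(p-1) -
            (p * (1 + 1/((p/(p-1)) * (p/(p-q)) * (8 * 2 ^ (d + 11) - 2) * K)) /
              (p * (1 + 1/((p/(p-1)) * (p/(p-q)) * (8 * 2 ^ (d + 11) - 2) * K)) - 1)) *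
            (1 + 1 / (p * (p/(p-q)) * (8 * 2 ^ (d + 11)) * K))) ≤
          (p * (1 + 1/((p/(p-1)) * (p/(p-q)) * (8 * 2 ^ (d + 11) - 2) * K)) - 1) *
            (8 * 2 ^ (d + 11) - 2) /
            ((1 / (p * (p/(p-q)) * (8 * 2 ^ (d + 11)) * K)) * p) ∧
        1 / (p/(p-1) -
            (p * (1 + 1/((p/(p-1)) * (p/(p-q)) * (8 * 2 ^ (d + 11) - 2) * K)) /
              (p * (1 + 1/((p/(p-1)) * (p/(p-q)) * (8 * 2 ^ (d + 11) - 2) * K)) - 1)) *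
            (1 + 1 / (p * (p/(p-q)) * (8 * 2 ^ (d + 11)) * K))) ≤ c * K := by
  have hp : 1 < p := lt_of_le_of_lt hq hqp
  have hp0 : 0 < p := by linarith
  have hpq : 0 < p - q := by linarith
  have hR : 1 ≤ p / (p - q) := by
    rw [le_div_iff₀ hpq]; linarith
  have hR0 : 0 < p / (p - q) := by positivity
  have h2 : (1 : ℝ) ≤ 2 ^ (d + 11) := one_le_pow₀ (by norm_num)
  have hT : (3 : ℝ) ≤ 8 * 2 ^ (d + 11) := by nlinarith
  have hT2 : (0 : ℝ) < 8 * 2 ^ (d + 11) - 2 := by linarith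
  have hT0 : (0 : ℝ) < 8 * 2 ^ (d + 11) := by linarith
  refine ⟨2 * (8 * 2 ^ (d + 11) - 2) * p * (p / (p - q)) * (8 * 2 ^ (d + 11)), by positivity,
    fun K hK => ?_⟩
  have hK0 : 0 < K := by linarith
  have hδ : 1 / ((p/(p-1)) * (p/(p-q)) * (8 * 2 ^ (d + 11) - 2) * K)
      = (p - 1) / (p * (p/(p-q)) * (8 * 2 ^ (d + 11) - 2) * K) := by
    have hp1 : 0 < p - 1 := by linarith
    have hd1 : 0 < (p/(p-1)) * (p/(p-q)) * (8 * 2 ^ (d + 11) - 2) * K :=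
      mul_pos (mul_pos (mul_pos (div_pos hp0 hp1) hR0) hT2) hK0
    have hd2 : 0 < p * (p/(p-q)) * (8 * 2 ^ (d + 11) - 2) * K :=
      mul_pos (mul_pos (mul_pos hp0 hR0) hT2) hK0
    have hcancel : (p - 1) * (p / (p - 1)) = p := by field_simp
    rw [div_eq_div_iff hd1.ne' hd2.ne']
    linear_combination (-(p/(p-q)) * (8 * 2 ^ (d + 11) - 2) * K) * hcancel
  obtain ⟨h1, h2', h3, h4⟩ := rough_aux p (p/(p-q)) (8 * 2 ^ (d + 11)) K
    (1 / (p * (p/(p-q)) * (8 * 2 ^ (d + 11)) * K))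
    (1 / ((p/(p-1)) * (p/(p-q)) * (8 * 2 ^ (d + 11) - 2) * K))
    (p * (1 + 1/((p/(p-1)) * (p/(p-q)) * (8 * 2 ^ (d + 11) - 2) * K)))
    hp hR hT hK rfl hδ rfl
  exact ⟨h1, h2', h3, h3.trans h4⟩

end
end
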